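/- Let m ≥ 1 and c ≥ 0, let R : ℝ → (real m×m matrices) be continuous, and let U : ℝ → (real m×m matrices) be differentiable with U'(t) + U(t)² + R(t) = 0 for all t ≥ 0, such that for every t ≥ 0 the matrix U(t) is positive semidefinite and c·I − U(t) is positive semidefinite. Suppose the limit χ := lim_{t→∞} (1/t)∫₀ᵗ tr(U(s)) ds exists. Then χ ≤ √( m · (−liminf_{t→∞} (1/t)∫₀ᵗ tr(R(s)) ds) ). -/

import Mathlib

/-!
Taking traces in the Riccati equation gives `(tr U)' = -tr(U²) - tr R`, so averaging over `[0, t]`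
and using `tr U ≥ 0` bounds the time average of `tr R` by `tr U(0) / t` minus the average of
`tr(U²)`. By the trace Cauchy–Schwarz inequality `(tr U)² ≤ m tr(U²)` and Jensen's inequality for
the average, the latter is at least `(average of tr U)² / m`, which tends to `χ² / m`. The bound
`0 ≤ U ≤ c` keeps the averages of `tr R` bounded below, so that their `liminf` is not a junk value.
-/

open MeasureTheory Filter Topology

noncomputable def timeAverage (f : ℝ → ℝ) (t : ℝ) : ℝ := 1 / t * ∫ s in (0 : ℝ)..t, f s

lemma timeAverage_eq_interval_average (f : ℝ → ℝ) (t : ℝ) :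
    timeAverage f t = ⨍ s in (0 : ℝ)..t, f s := by
  rw [interval_average_eq, timeAverage, sub_zero, one_div, smul_eq_mul]

lemma timeAverage_const (a : ℝ) {t : ℝ} (ht : t ≠ 0) : timeAverage (fun _ => a) t = a := by
  simp [timeAverage, ht]

lemma timeAverage_const_mul (a : ℝ) (f : ℝ → ℝ) (t : ℝ) :
    timeAverage (fun s => a * f s) t = a * timeAverage f t := by
  simp only [timeAverage, intervalIntegral.integral_const_mul]
  ring

lemma timeAverage_mono {f g : ℝ → ℝ} {t : ℝ} (hf : IntervalIntegrable f volume 0 t)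
    (hg : IntervalIntegrable g volume 0 t) (ht : 0 ≤ t) (hfg : ∀ s ∈ Set.Icc 0 t, f s ≤ g s) :
    timeAverage f t ≤ timeAverage g t :=
  mul_le_mul_of_nonneg_left (intervalIntegral.integral_mono_on ht hf hg hfg) (by positivity)

lemma sq_timeAverage_le {f : ℝ → ℝ} {t : ℝ} (hf : Continuous f) (ht : 0 < t) :
    timeAverage f t ^ 2 ≤ timeAverage (fun s => f s ^ 2) t := by
  simp only [timeAverage_eq_interval_average, Set.uIoc_of_le ht.le]
  exact (even_two.convexOn_pow (𝕜 := ℝ)).map_set_average_le (continuousOn_pow 2) isClosed_univ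
    (by simp [ht]) (by simp) (by simp) hf.integrableOn_Ioc (hf.pow 2).integrableOn_Ioc

namespace Matrix

variable {n : Type*} [Fintype n]

theorem IsHermitian.trace_sq_le_card_mul_trace_mul_self {A : Matrix n n ℝ} (hA : A.IsHermitian) :
    A.trace ^ 2 ≤ Fintype.card n * (A * A).trace := by
  have hdiag : A.trace ^ 2 ≤ Fintype.card n * ∑ i, A i i ^ 2 :=
    sq_sum_le_card_mul_sum_sq (s := Finset.univ) (f := A.diag)
  refine hdiag.trans (mul_le_mul_of_nonneg_left ?_ (Nat.cast_nonneg _))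
  simp only [trace, diag, mul_apply]
  refine Finset.sum_le_sum fun i _ => ?_
  have hsq : ∀ j, A i j * A j i = A i j ^ 2 := fun j => by
    rw [← hA.apply i j, star_trivial, sq]
  simp only [hsq]
  exact Finset.single_le_sum (f := fun j => A i j ^ 2) (fun j _ => sq_nonneg _) (Finset.mem_univ i)

variable [DecidableEq n]

open scoped MatrixOrder in
theorem PosSemidef.trace_mul_nonneg {A B : Matrix n n ℝ} (hA : A.PosSemidef)
    (hB : B.PosSemidef) : 0 ≤ (A * B).trace := by
  obtain ⟨S, hS, rfl⟩ : ∃ S : Matrix n n ℝ, S.IsHermitian ∧ A = S * S := by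
    refine ⟨CFC.sqrt A, ?_, ?_⟩
    · exact (nonneg_iff_posSemidef.mp (CFC.sqrt_nonneg A)).isHermitian
    · rw [← sq, CFC.sq_sqrt A hA.nonneg]
  have h := (hB.conjTranspose_mul_mul_same S).trace_nonneg
  rw [hS.eq, mul_assoc] at h
  rwa [mul_assoc, trace_mul_comm, mul_assoc]

theorem trace_le_of_posSemidef_sub {A : Matrix n n ℝ} {c : ℝ} (h : (c • 1 - A).PosSemidef) :
    A.trace ≤ c * Fintype.card n := by
  have := h.trace_nonneg
  rw [trace_sub, trace_smul, trace_one, smul_eq_mul] at this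
  linarith

theorem PosSemidef.trace_mul_self_le {A : Matrix n n ℝ} {c : ℝ} (hA : A.PosSemidef)
    (h : (c • 1 - A).PosSemidef) : (A * A).trace ≤ c * A.trace := by
  have := hA.trace_mul_nonneg h
  rw [mul_sub, Matrix.mul_smul, mul_one, trace_sub, trace_smul, smul_eq_mul] at this
  linarith

end Matrix

section Riccati

variable {n : Type*} {R U U' : ℝ → Matrix n n ℝ}

lemma continuous_of_hasDerivAt_apply (hU : ∀ t i j, HasDerivAt (fun τ => U τ i j) (U' t i j) t) :
    Continuous U :=
  continuous_pi fun i => continuous_pi fun j =>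
    continuous_iff_continuousAt.2 fun t => (hU t i j).continuousAt

variable [Fintype n]

lemma hasDerivAt_trace_of_hasDerivAt_apply {t : ℝ}
    (hU : ∀ i, HasDerivAt (fun τ => U τ i i) (U' t i i) t) :
    HasDerivAt (fun τ => (U τ).trace) (U' t).trace t := by
  simpa only [Matrix.trace, Matrix.diag] using
    HasDerivAt.fun_sum fun i (_ : i ∈ Finset.univ) => hU i

variable (hU : ∀ t i j, HasDerivAt (fun τ => U τ i j) (U' t i j) t) (hR : Continuous R)
  (hric : ∀ t, 0 ≤ t → U' t + U t * U t + R t = 0)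
include hU hR hric

lemma timeAverage_trace_eq_of_riccati {t : ℝ} (ht : 0 ≤ t) :
    timeAverage (fun s => (R s).trace) t =
      ((U 0).trace - (U t).trace) / t - timeAverage (fun s => (U s * U s).trace) t := by
  have hUc := continuous_of_hasDerivAt_apply hU
  have hQc : Continuous fun s => (U s * U s).trace := (hUc.matrix_mul hUc).matrix_trace
  have hderiv : ∀ s ∈ Set.uIcc 0 t,
      HasDerivAt (fun τ => (U τ).trace) (-(U s * U s).trace - (R s).trace) s := by
    intro s hs
    rw [Set.uIcc_of_le ht] at hs
    have hU' : U' s = -(U s * U s) - R s := by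
      have h := hric s hs.1
      rw [add_assoc] at h
      rw [eq_neg_of_add_eq_zero_left h, neg_add']
    simpa only [hU', Matrix.trace_sub, Matrix.trace_neg] using
      hasDerivAt_trace_of_hasDerivAt_apply fun i => hU s i i
  have hFTC := intervalIntegral.integral_eq_sub_of_hasDerivAt hderiv
    ((hQc.neg.sub hR.matrix_trace).intervalIntegrable 0 t)
  rw [intervalIntegral.integral_sub (f := fun s => -(U s * U s).trace)
    (hQc.neg.intervalIntegrable 0 t) (hR.matrix_trace.intervalIntegrable 0 t),
    intervalIntegral.integral_neg] at hFTC
  simp only [timeAverage]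
  linear_combination (-1 / t) * hFTC

lemma timeAverage_trace_le_of_riccati [Nonempty n] (hpsd : ∀ t, 0 ≤ t → (U t).PosSemidef)
    {t : ℝ} (ht : 0 < t) :
    timeAverage (fun s => (R s).trace) t ≤
      (U 0).trace / t - timeAverage (fun s => (U s).trace) t ^ 2 / Fintype.card n := by
  have hUc := continuous_of_hasDerivAt_apply hU
  have hcard : (0 : ℝ) < Fintype.card n := by exact_mod_cast Fintype.card_pos
  have hcauchySchwarz : timeAverage (fun s => (U s).trace) t ^ 2 ≤
      Fintype.card n * timeAverage (fun s => (U s * U s).trace) t := by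
    calc timeAverage (fun s => (U s).trace) t ^ 2
        ≤ timeAverage (fun s => (U s).trace ^ 2) t := sq_timeAverage_le hUc.matrix_trace ht
      _ ≤ timeAverage (fun s => Fintype.card n * (U s * U s).trace) t :=
        timeAverage_mono ((hUc.matrix_trace.pow 2).intervalIntegrable 0 t)
          ((continuous_const.mul (hUc.matrix_mul hUc).matrix_trace).intervalIntegrable 0 t) ht.le
          fun s hs => (hpsd s hs.1).isHermitian.trace_sq_le_card_mul_trace_mul_self
      _ = Fintype.card n * timeAverage (fun s => (U s * U s).trace) t :=
        timeAverage_const_mul _ _ _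
  have hUt : 0 ≤ (U t).trace / t := div_nonneg (hpsd t ht.le).trace_nonneg ht.le
  rw [timeAverage_trace_eq_of_riccati hU hR hric ht.le, sub_div]
  linarith [(div_le_iff₀' hcard).2 hcauchySchwarz]

lemma le_timeAverage_trace_of_riccati [DecidableEq n] {c : ℝ} (hc : 0 ≤ c)
    (hpsd : ∀ t, 0 ≤ t → (U t).PosSemidef) (hle : ∀ t, 0 ≤ t → (c • 1 - U t).PosSemidef)
    {t : ℝ} (ht : 0 < t) :
    -(c * Fintype.card n) / t - c ^ 2 * Fintype.card n ≤ timeAverage (fun s => (R s).trace) t := by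
  have hUc := continuous_of_hasDerivAt_apply hU
  have hsq : ∀ s, 0 ≤ s → (U s * U s).trace ≤ c ^ 2 * Fintype.card n := fun s hs =>
    calc (U s * U s).trace ≤ c * (U s).trace := (hpsd s hs).trace_mul_self_le (hle s hs)
      _ ≤ c * (c * Fintype.card n) :=
        mul_le_mul_of_nonneg_left (Matrix.trace_le_of_posSemidef_sub (hle s hs)) hc
      _ = c ^ 2 * Fintype.card n := by ring
  have hsq_avg : timeAverage (fun s => (U s * U s).trace) t ≤ c ^ 2 * Fintype.card n := by
    calc timeAverage (fun s => (U s * U s).trace) t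
        ≤ timeAverage (fun _ => c ^ 2 * Fintype.card n) t :=
          timeAverage_mono ((hUc.matrix_mul hUc).matrix_trace.intervalIntegrable 0 t)
            intervalIntegrable_const ht.le fun s hs => hsq s hs.1
      _ = c ^ 2 * Fintype.card n := timeAverage_const _ ht.ne'
  have hU0 : 0 ≤ (U 0).trace / t := div_nonneg (hpsd 0 le_rfl).trace_nonneg ht.le
  have hUt : (U t).trace / t ≤ c * Fintype.card n / t :=
    div_le_div_of_nonneg_right (Matrix.trace_le_of_posSemidef_sub (hle t ht.le)) ht.le
  rw [timeAverage_trace_eq_of_riccati hU hR hric ht.le, sub_div, neg_div]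
  linarith

end Riccati

/-- Right inequality of Lemma 3.1: for a bounded Riccati solution `0 ≤ U(t) ≤ c • I`, if
`χ = lim (1/t) ∫₀ᵗ tr U` exists, then `χ ≤ √(m * (-liminf (1/t) ∫₀ᵗ tr R))`. -/
theorem lyapunov_le_sqrt_neg_liminf (m : ℕ) (hm : 1 ≤ m) (c : ℝ) (hc : 0 ≤ c)
    (R U U' : ℝ → Matrix (Fin m) (Fin m) ℝ)
    (hR : Continuous R)
    (hU : ∀ t, ∀ i j, HasDerivAt (fun τ => U τ i j) (U' t i j) t)
    (hric : ∀ t, 0 ≤ t → U' t + U t * U t + R t = 0)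
    (hpsd : ∀ t, 0 ≤ t → (U t).PosSemidef)
    (hle : ∀ t, 0 ≤ t → (c • (1 : Matrix (Fin m) (Fin m) ℝ) - U t).PosSemidef)
    (χ : ℝ)
    (hχ : Tendsto (fun t : ℝ => (1 / t) * ∫ s in (0:ℝ)..t, (U s).trace) atTop (nhds χ)) :
    χ ≤ Real.sqrt ((m : ℝ) *
      (-(liminf (fun t : ℝ => (1 / t) * ∫ s in (0:ℝ)..t, (R s).trace) atTop))) := by
  have : Nonempty (Fin m) := ⟨⟨0, hm⟩⟩
  have hm0 : (0 : ℝ) < m := by exact_mod_cast hm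
  set F := timeAverage (fun s => (R s).trace)
  have hlower : ∀ᶠ t in atTop, -(c * m) / t - c ^ 2 * m ≤ F t :=
    (eventually_gt_atTop 0).mono fun t ht => by
      simpa using le_timeAverage_trace_of_riccati hU hR hric hc hpsd hle ht
  have hupper : ∀ᶠ t in atTop,
      F t ≤ (U 0).trace / t - timeAverage (fun s => (U s).trace) t ^ 2 / m :=
    (eventually_gt_atTop 0).mono fun t ht => by
      simpa using timeAverage_trace_le_of_riccati hU hR hric hpsd ht
  have hbdd : IsBoundedUnder (· ≥ ·) atTop F :=
    (((tendsto_const_nhds.div_atTop tendsto_id).sub tendsto_const_nhds).isBoundedUnder_ge).mono_ge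
      hlower
  have hlim : Tendsto (fun t => (U 0).trace / t - timeAverage (fun s => (U s).trace) t ^ 2 / m)
      atTop (𝓝 (0 - χ ^ 2 / m)) :=
    (tendsto_const_nhds.div_atTop tendsto_id).sub ((hχ.pow 2).div_const _)
  have hliminf : liminf F atTop ≤ 0 - χ ^ 2 / m :=
    (liminf_le_liminf hupper hbdd hlim.isCoboundedUnder_ge).trans_eq hlim.liminf_eq
  refine Real.le_sqrt_of_sq_le ?_
  rwa [zero_sub, le_neg, div_le_iff₀ hm0, mul_comm] at hliminf
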